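/- Let Ĝ be a signed complete bigraph, i.e. a signed bigraph whose underlying graph is a complete bipartite graph. If Ĝ has a signed simplicial edge, then Ĝ is a chordal signed bigraph. -/

import Mathlib

universe u

/-! ## Basic unsigned notions for bipartite graphs -/

/-- `G` has an induced cycle of length at least 6 (signs, if any, are arbitrary). -/
def HasLongInducedCycle {V : Type u} (G : SimpleGraph V) : Prop :=
  ∃ n : ℕ, 6 ≤ n ∧ ∃ f : ZMod n → V, Function.Injective f ∧
    ∀ i j : ZMod n, G.Adj (f i) (f j) ↔ (j = i + 1 ∨ i = j + 1)

/-- A graph is separable if it contains an induced `2K₂`. -/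
def IsSeparableGraph {V : Type u} (G : SimpleGraph V) : Prop :=
  ∃ a b c d : V, [a, b, c, d].Pairwise (· ≠ ·) ∧
    G.Adj a b ∧ G.Adj c d ∧ ¬ G.Adj a c ∧ ¬ G.Adj a d ∧ ¬ G.Adj b c ∧ ¬ G.Adj b d

/-- An edge `ab` of a bipartite graph is simplicial if every vertex of `N(a) - {b}`
is adjacent to every vertex of `N(b) - {a}`. -/
def SimplicialEdge {V : Type u} (G : SimpleGraph V) (a b : V) : Prop :=
  G.Adj a b ∧ ∀ c ∈ G.neighborSet a \ {b}, ∀ d ∈ G.neighborSet b \ {a}, G.Adj c d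

/-- A canonical ordering of a bigraph with bipartition given by `side`
(`X` is the `side = true` part, `Y` the `side = false` part): the neighbourhoods of
the `x`'s are decreasing and those of the `y`'s are increasing. -/
def IsCanonicalOrdering {V : Type u} (G : SimpleGraph V) (side : V → Bool)
    {α β : ℕ} (x : Fin α → V) (y : Fin β → V) : Prop :=
  Function.Injective x ∧ Function.Injective y ∧
  (∀ w : V, side w = true ↔ w ∈ Set.range x) ∧
  (∀ w : V, side w = false ↔ w ∈ Set.range y) ∧
  (∀ i j : Fin α, i ≤ j → G.neighborSet (x j) ⊆ G.neighborSet (x i)) ∧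
  (∀ i j : Fin β, i ≤ j → G.neighborSet (y i) ⊆ G.neighborSet (y j))

/-- `H` is a non-trivial (i.e. containing at least one edge) connected component
of `G - S`. -/
def IsNontrivialComponentOf {V : Type u} (G : SimpleGraph V) (S H : Set V) : Prop :=
  H ⊆ Sᶜ ∧ (G.induce H).Connected ∧
  (∀ a ∈ H, ∀ b ∈ Sᶜ, G.Adj a b → b ∈ H) ∧
  (∃ a ∈ H, ∃ b ∈ H, G.Adj a b)

/-- `S` minimally separates the non-trivial components `H` and `H'` of `G - S`:
every vertex of `S` has a neighbour in `H` and a neighbour in `H'`. -/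
def MinimallySeparates {V : Type u} (G : SimpleGraph V) (S H H' : Set V) : Prop :=
  IsNontrivialComponentOf G S H ∧ IsNontrivialComponentOf G S H' ∧ H ≠ H' ∧
  ∀ s ∈ S, (∃ a ∈ H, G.Adj s a) ∧ (∃ a ∈ H', G.Adj s a)

/-! ## Signed bigraphs -/

/-- A signed bigraph: a bipartite graph (with bipartition recorded by `side`)
whose edges carry a sign (`true` = positive, `false` = negative). -/
structure SignedBigraph (V : Type u) where
  graph : SimpleGraph V
  sign : V → V → Bool
  sign_symm : ∀ a b : V, sign a b = sign b a
  side : V → Bool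
  bipartite : ∀ ⦃a b : V⦄, graph.Adj a b → side a ≠ side b

namespace SignedBigraph

variable {V : Type u}

def Adj (G : SignedBigraph V) (a b : V) : Prop := G.graph.Adj a b

/-- `N(ab) = (N(a) ∪ N(b)) - {a, b}`. -/
def edgeNbhd (G : SignedBigraph V) (a b : V) : Set V :=
  (G.graph.neighborSet a ∪ G.graph.neighborSet b) \ {a, b}

/-- The edge `ab` is signed simplicial: `N(ab)` induces a positive biclique. -/
def SignedSimplicial (G : SignedBigraph V) (a b : V) : Prop :=
  G.Adj a b ∧
    ∀ c ∈ G.edgeNbhd a b, ∀ d ∈ G.edgeNbhd a b,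
      G.side c ≠ G.side d → (G.Adj c d ∧ G.sign c d = true)

/-- Delete a set of edges from a signed bigraph (keeping all vertices). -/
def deleteEdges (G : SignedBigraph V) (s : Set (Sym2 V)) : SignedBigraph V where
  graph := G.graph.deleteEdges s
  sign := G.sign
  sign_symm := G.sign_symm
  side := G.side
  bipartite := by
    intro a b h
    exact G.bipartite (SimpleGraph.deleteEdges_adj.mp h).1

/-- The induced signed subgraph on a set of vertices. -/
def induce (G : SignedBigraph V) (A : Set V) : SignedBigraph A where
  graph := G.graph.induce A
  sign a b := G.sign a b
  sign_symm a b := G.sign_symm a b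
  side a := G.side a
  bipartite := by
    intro a b h
    exact G.bipartite h

/-- A chordal signed bigraph: the edges can be ordered `e₁, …, e_m` so that each `eᵢ`
is a signed simplicial edge of the signed bigraph obtained by deleting `e₁, …, e_{i-1}`. -/
def IsChordal (G : SignedBigraph V) : Prop :=
  ∃ l : List (Sym2 V), l.Nodup ∧ (∀ e, e ∈ G.graph.edgeSet ↔ e ∈ l) ∧
    ∀ (i : ℕ) (h : i < l.length), ∃ a b : V,
      l.get ⟨i, h⟩ = s(a, b) ∧
      (G.deleteEdges {e | e ∈ l.take i}).SignedSimplicial a b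

/-! ## Forbidden patterns F₁ – F₆, D, long cycles -/

/-- `G` contains the all-negative 4-cycle `F₁` as an induced subgraph. -/
def HasF1 (G : SignedBigraph V) : Prop :=
  ∃ u1 u2 v1 v2 : V,
    [u1, u2, v1, v2].Pairwise (· ≠ ·) ∧
    G.Adj u1 v1 ∧ G.Adj u1 v2 ∧ G.Adj u2 v1 ∧ G.Adj u2 v2 ∧
    ¬ G.Adj u1 u2 ∧ ¬ G.Adj v1 v2 ∧
    G.sign u1 v1 = false ∧ G.sign u1 v2 = false ∧
    G.sign u2 v1 = false ∧ G.sign u2 v2 = false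

/-- `G` contains a member of `F₂` (a signed `K_{2,3}`) as an induced subgraph. -/
def HasF2 (G : SignedBigraph V) : Prop :=
  ∃ u1 u2 v1 v2 v3 : V,
    [u1, u2, v1, v2, v3].Pairwise (· ≠ ·) ∧
    G.Adj u1 v1 ∧ G.Adj u1 v2 ∧ G.Adj u1 v3 ∧
    G.Adj u2 v1 ∧ G.Adj u2 v2 ∧ G.Adj u2 v3 ∧
    ¬ G.Adj u1 u2 ∧ ¬ G.Adj v1 v2 ∧ ¬ G.Adj v1 v3 ∧ ¬ G.Adj v2 v3 ∧
    G.sign u1 v1 = false ∧ G.sign u1 v2 = false ∧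
    G.sign u2 v2 = false ∧ G.sign u2 v3 = false

/-- `G` contains a member of `F₃` (a signed `K_{2,4}`) as an induced subgraph. -/
def HasF3 (G : SignedBigraph V) : Prop :=
  ∃ u1 u2 v1 v2 v3 v4 : V,
    [u1, u2, v1, v2, v3, v4].Pairwise (· ≠ ·) ∧
    G.Adj u1 v1 ∧ G.Adj u1 v2 ∧ G.Adj u1 v3 ∧ G.Adj u1 v4 ∧
    G.Adj u2 v1 ∧ G.Adj u2 v2 ∧ G.Adj u2 v3 ∧ G.Adj u2 v4 ∧
    ¬ G.Adj u1 u2 ∧ ¬ G.Adj v1 v2 ∧ ¬ G.Adj v1 v3 ∧ ¬ G.Adj v1 v4 ∧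
    ¬ G.Adj v2 v3 ∧ ¬ G.Adj v2 v4 ∧ ¬ G.Adj v3 v4 ∧
    G.sign u1 v1 = false ∧ G.sign u1 v2 = false ∧
    G.sign u2 v3 = false ∧ G.sign u2 v4 = false

/-- `G` contains a member of `F₄` (a signed `K_{3,3}` with negative perfect matching)
as an induced subgraph. -/
def HasF4 (G : SignedBigraph V) : Prop :=
  ∃ u1 u2 u3 v1 v2 v3 : V,
    [u1, u2, u3, v1, v2, v3].Pairwise (· ≠ ·) ∧
    G.Adj u1 v1 ∧ G.Adj u1 v2 ∧ G.Adj u1 v3 ∧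
    G.Adj u2 v1 ∧ G.Adj u2 v2 ∧ G.Adj u2 v3 ∧
    G.Adj u3 v1 ∧ G.Adj u3 v2 ∧ G.Adj u3 v3 ∧
    ¬ G.Adj u1 u2 ∧ ¬ G.Adj u1 u3 ∧ ¬ G.Adj u2 u3 ∧
    ¬ G.Adj v1 v2 ∧ ¬ G.Adj v1 v3 ∧ ¬ G.Adj v2 v3 ∧
    G.sign u1 v1 = false ∧ G.sign u2 v2 = false ∧ G.sign u3 v3 = false

/-- `G` contains a member of `F₅` as an induced subgraph. -/
def HasF5 (G : SignedBigraph V) : Prop :=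
  ∃ x1 x2 x3 y1 y2 y3 : V,
    [x1, x2, x3, y1, y2, y3].Pairwise (· ≠ ·) ∧
    G.Adj x1 y1 ∧ G.Adj x1 y2 ∧ ¬ G.Adj x1 y3 ∧
    G.Adj x2 y1 ∧ G.Adj x2 y2 ∧ G.Adj x2 y3 ∧
    G.Adj x3 y1 ∧ G.Adj x3 y2 ∧ G.Adj x3 y3 ∧
    ¬ G.Adj x1 x2 ∧ ¬ G.Adj x1 x3 ∧ ¬ G.Adj x2 x3 ∧
    ¬ G.Adj y1 y2 ∧ ¬ G.Adj y1 y3 ∧ ¬ G.Adj y2 y3 ∧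
    G.sign x2 y1 = false ∧ G.sign x3 y2 = false

/-- `G` contains a member of `F₆` as an induced subgraph. -/
def HasF6 (G : SignedBigraph V) : Prop :=
  ∃ x1 x2 x3 x4 y1 y2 y3 y4 : V,
    [x1, x2, x3, x4, y1, y2, y3, y4].Pairwise (· ≠ ·) ∧
    G.Adj x1 y1 ∧ G.Adj x1 y2 ∧ ¬ G.Adj x1 y3 ∧ ¬ G.Adj x1 y4 ∧
    G.Adj x2 y1 ∧ G.Adj x2 y2 ∧ ¬ G.Adj x2 y3 ∧ ¬ G.Adj x2 y4 ∧
    G.Adj x3 y1 ∧ G.Adj x3 y2 ∧ G.Adj x3 y3 ∧ G.Adj x3 y4 ∧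
    G.Adj x4 y1 ∧ G.Adj x4 y2 ∧ G.Adj x4 y3 ∧ G.Adj x4 y4 ∧
    ¬ G.Adj x1 x2 ∧ ¬ G.Adj x1 x3 ∧ ¬ G.Adj x1 x4 ∧
    ¬ G.Adj x2 x3 ∧ ¬ G.Adj x2 x4 ∧ ¬ G.Adj x3 x4 ∧
    ¬ G.Adj y1 y2 ∧ ¬ G.Adj y1 y3 ∧ ¬ G.Adj y1 y4 ∧
    ¬ G.Adj y2 y3 ∧ ¬ G.Adj y2 y4 ∧ ¬ G.Adj y3 y4 ∧
    G.sign x1 y1 = false ∧ G.sign x2 y1 = false ∧ G.sign x3 y2 = false ∧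
    G.sign x4 y3 = false ∧ G.sign x4 y4 = false

/-- `G` contains a member of `D` (a 6-cycle `x₁y₁x₂y₃x₃y₂x₁` plus a negative chord
`x₂y₂`) as an induced subgraph. -/
def HasD (G : SignedBigraph V) : Prop :=
  ∃ x1 x2 x3 y1 y2 y3 : V,
    [x1, x2, x3, y1, y2, y3].Pairwise (· ≠ ·) ∧
    G.Adj x1 y1 ∧ G.Adj y1 x2 ∧ G.Adj x2 y3 ∧ G.Adj y3 x3 ∧
    G.Adj x3 y2 ∧ G.Adj y2 x1 ∧
    G.Adj x2 y2 ∧ G.sign x2 y2 = false ∧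
    ¬ G.Adj x1 y3 ∧ ¬ G.Adj x3 y1 ∧
    ¬ G.Adj x1 x2 ∧ ¬ G.Adj x1 x3 ∧ ¬ G.Adj x2 x3 ∧
    ¬ G.Adj y1 y2 ∧ ¬ G.Adj y1 y3 ∧ ¬ G.Adj y2 y3

/-- `G` contains an induced signed cycle of length at least 6. -/
def HasLongCycle (G : SignedBigraph V) : Prop :=
  HasLongInducedCycle G.graph

/-! ## Minimal forbidden patterns M₁ – M₅ for complete bigraphs -/

def HasM1 (G : SignedBigraph V) : Prop := G.HasF1

def HasM2 (G : SignedBigraph V) : Prop :=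
  ∃ u1 u2 v1 v2 v3 : V,
    [u1, u2, v1, v2, v3].Pairwise (· ≠ ·) ∧
    G.Adj u1 v1 ∧ G.Adj u1 v2 ∧ G.Adj u1 v3 ∧
    G.Adj u2 v1 ∧ G.Adj u2 v2 ∧ G.Adj u2 v3 ∧
    ¬ G.Adj u1 u2 ∧ ¬ G.Adj v1 v2 ∧ ¬ G.Adj v1 v3 ∧ ¬ G.Adj v2 v3 ∧
    G.sign u1 v1 = false ∧ G.sign u1 v2 = false ∧
    G.sign u2 v2 = false ∧ G.sign u2 v3 = false ∧
    G.sign u1 v3 = true ∧ G.sign u2 v1 = true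

def HasM3 (G : SignedBigraph V) : Prop :=
  ∃ u1 u2 v1 v2 v3 v4 : V,
    [u1, u2, v1, v2, v3, v4].Pairwise (· ≠ ·) ∧
    G.Adj u1 v1 ∧ G.Adj u1 v2 ∧ G.Adj u1 v3 ∧ G.Adj u1 v4 ∧
    G.Adj u2 v1 ∧ G.Adj u2 v2 ∧ G.Adj u2 v3 ∧ G.Adj u2 v4 ∧
    ¬ G.Adj u1 u2 ∧ ¬ G.Adj v1 v2 ∧ ¬ G.Adj v1 v3 ∧ ¬ G.Adj v1 v4 ∧
    ¬ G.Adj v2 v3 ∧ ¬ G.Adj v2 v4 ∧ ¬ G.Adj v3 v4 ∧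
    G.sign u1 v1 = false ∧ G.sign u1 v2 = false ∧
    G.sign u2 v3 = false ∧ G.sign u2 v4 = false ∧
    G.sign u1 v3 = true ∧ G.sign u1 v4 = true ∧
    G.sign u2 v1 = true ∧ G.sign u2 v2 = true

def HasM4 (G : SignedBigraph V) : Prop :=
  ∃ u1 u2 u3 v1 v2 v3 : V,
    [u1, u2, u3, v1, v2, v3].Pairwise (· ≠ ·) ∧
    G.Adj u1 v1 ∧ G.Adj u1 v2 ∧ G.Adj u1 v3 ∧
    G.Adj u2 v1 ∧ G.Adj u2 v2 ∧ G.Adj u2 v3 ∧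
    G.Adj u3 v1 ∧ G.Adj u3 v2 ∧ G.Adj u3 v3 ∧
    ¬ G.Adj u1 u2 ∧ ¬ G.Adj u1 u3 ∧ ¬ G.Adj u2 u3 ∧
    ¬ G.Adj v1 v2 ∧ ¬ G.Adj v1 v3 ∧ ¬ G.Adj v2 v3 ∧
    G.sign u1 v1 = false ∧ G.sign u2 v2 = false ∧ G.sign u3 v3 = false ∧
    G.sign u1 v2 = true ∧ G.sign u1 v3 = true ∧ G.sign u2 v1 = true ∧
    G.sign u2 v3 = true ∧ G.sign u3 v1 = true ∧ G.sign u3 v2 = true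

def HasM5 (G : SignedBigraph V) : Prop :=
  ∃ x1 x2 x3 y1 y2 y3 : V,
    [x1, x2, x3, y1, y2, y3].Pairwise (· ≠ ·) ∧
    G.Adj x1 y1 ∧ G.Adj x1 y2 ∧ G.Adj x1 y3 ∧
    G.Adj x2 y1 ∧ G.Adj x2 y2 ∧ G.Adj x2 y3 ∧
    G.Adj x3 y1 ∧ G.Adj x3 y2 ∧ G.Adj x3 y3 ∧
    ¬ G.Adj x1 x2 ∧ ¬ G.Adj x1 x3 ∧ ¬ G.Adj x2 x3 ∧
    ¬ G.Adj y1 y2 ∧ ¬ G.Adj y1 y3 ∧ ¬ G.Adj y2 y3 ∧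
    G.sign x1 y1 = false ∧ G.sign x1 y2 = false ∧
    G.sign x2 y2 = false ∧ G.sign x3 y3 = false ∧
    G.sign x1 y3 = true ∧ G.sign x2 y1 = true ∧ G.sign x2 y3 = true ∧
    G.sign x3 y1 = true ∧ G.sign x3 y2 = true

/-! ## The patterns W₁ – W₆ (relativized to an ambient vertex set `A`, with the
distinguished vertices being exactly the vertices in `S`). -/

def HasW1In (G : SignedBigraph V) (A S : Set V) : Prop :=
  ∃ u y x z : V, u ∈ A ∧ y ∈ A ∧ x ∈ A ∧ z ∈ A ∧
    [u, y, x, z].Pairwise (· ≠ ·) ∧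
    G.Adj u y ∧ G.Adj u z ∧ G.Adj x y ∧ G.Adj x z ∧
    ¬ G.Adj u x ∧ ¬ G.Adj y z ∧
    G.sign x y = false ∧ G.sign x z = false ∧
    x ∈ S ∧ u ∉ S ∧ y ∉ S ∧ z ∉ S

def HasW2In (G : SignedBigraph V) (A S : Set V) : Prop :=
  ∃ u y v z p : V, u ∈ A ∧ y ∈ A ∧ v ∈ A ∧ z ∈ A ∧ p ∈ A ∧
    [u, y, v, z, p].Pairwise (· ≠ ·) ∧
    G.Adj u y ∧ G.Adj u z ∧ G.Adj v y ∧ G.Adj v z ∧ G.Adj p v ∧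
    ¬ G.Adj u v ∧ ¬ G.Adj y z ∧ ¬ G.Adj p u ∧ ¬ G.Adj p y ∧ ¬ G.Adj p z ∧
    G.sign v y = false ∧ G.sign v z = false ∧
    p ∈ S ∧ u ∉ S ∧ y ∉ S ∧ v ∉ S ∧ z ∉ S

def HasW3In (G : SignedBigraph V) (A S : Set V) : Prop :=
  ∃ u y v z p : V, u ∈ A ∧ y ∈ A ∧ v ∈ A ∧ z ∈ A ∧ p ∈ A ∧
    [u, y, v, z, p].Pairwise (· ≠ ·) ∧
    G.Adj u y ∧ G.Adj u z ∧ G.Adj v y ∧ G.Adj v z ∧ G.Adj p v ∧ G.Adj p u ∧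
    ¬ G.Adj u v ∧ ¬ G.Adj y z ∧ ¬ G.Adj p y ∧ ¬ G.Adj p z ∧
    G.sign v y = false ∧ G.sign v z = false ∧ G.sign p u = false ∧
    p ∈ S ∧ u ∉ S ∧ y ∉ S ∧ v ∉ S ∧ z ∉ S

def HasW4In (G : SignedBigraph V) (A S : Set V) : Prop :=
  ∃ u y c z p q : V, u ∈ A ∧ y ∈ A ∧ c ∈ A ∧ z ∈ A ∧ p ∈ A ∧ q ∈ A ∧
    [u, y, c, z, p, q].Pairwise (· ≠ ·) ∧
    G.Adj u y ∧ G.Adj u z ∧ G.Adj c y ∧ G.Adj c z ∧ G.Adj p c ∧ G.Adj p u ∧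
    G.Adj q p ∧
    ¬ G.Adj u c ∧ ¬ G.Adj y z ∧ ¬ G.Adj p y ∧ ¬ G.Adj p z ∧
    ¬ G.Adj q u ∧ ¬ G.Adj q y ∧ ¬ G.Adj q c ∧ ¬ G.Adj q z ∧
    G.sign c y = false ∧ G.sign c z = false ∧ G.sign p u = false ∧
    q ∈ S ∧ u ∉ S ∧ y ∉ S ∧ c ∉ S ∧ z ∉ S ∧ p ∉ S

def HasW5In (G : SignedBigraph V) (A S : Set V) : Prop :=
  ∃ u y v z x : V, u ∈ A ∧ y ∈ A ∧ v ∈ A ∧ z ∈ A ∧ x ∈ A ∧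
    [u, y, v, z, x].Pairwise (· ≠ ·) ∧
    G.Adj u y ∧ G.Adj u z ∧ G.Adj v y ∧ G.Adj v z ∧ G.Adj x v ∧ G.Adj x u ∧
    ¬ G.Adj u v ∧ ¬ G.Adj y z ∧ ¬ G.Adj x y ∧ ¬ G.Adj x z ∧
    G.sign v y = false ∧ G.sign x u = false ∧
    x ∈ S ∧ y ∈ S ∧ u ∉ S ∧ v ∉ S ∧ z ∉ S

def HasW6In (G : SignedBigraph V) (A S : Set V) : Prop :=
  ∃ u y v z x : V, u ∈ A ∧ y ∈ A ∧ v ∈ A ∧ z ∈ A ∧ x ∈ A ∧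
    [u, y, v, z, x].Pairwise (· ≠ ·) ∧
    G.Adj u y ∧ G.Adj u z ∧ G.Adj v y ∧ G.Adj v z ∧ G.Adj x v ∧
    ¬ G.Adj u v ∧ ¬ G.Adj y z ∧ ¬ G.Adj x u ∧ ¬ G.Adj x y ∧ ¬ G.Adj x z ∧
    G.sign v y = false ∧
    x ∈ S ∧ y ∈ S ∧ u ∉ S ∧ v ∉ S ∧ z ∉ S

/-! ## Tadpoles, sums and joins -/

/-- The vertex set of a tadpole with heads `w, y, z` and path vertices `x`. -/
def tadVerts {n : ℕ} (w y z : V) (x : Fin n → V) : Set V :=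
  {w, y, z} ∪ Set.range x

/-- The data `(w, y, z, x)` forms an induced tadpole in `G`:
`w, y, z, x ⟨k⟩` induce a 4-cycle whose edges `x ⟨k⟩ y` and `x ⟨k⟩ z` are negative,
together with the induced path `x ⟨k⟩, x ⟨k-1⟩, …, x 0`; the vertex `x 0` is the end
and `w, y, z` are the heads.  If `t2 = true` the tadpole is of type 2: there is
additionally a negative edge from `w` to `x ⟨k-1⟩`.
(The paper's parameter `k ≥ 1` corresponds to `k + 1` here.) -/
structure IsInducedTadpole (G : SignedBigraph V) (k : ℕ) (t2 : Bool)
    (w y z : V) (x : Fin (k + 1) → V) : Prop where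
  t2_len : t2 = true → 1 ≤ k
  inj : Function.Injective x
  w_notmem : ∀ i, w ≠ x i
  y_notmem : ∀ i, y ≠ x i
  z_notmem : ∀ i, z ≠ x i
  wy : w ≠ y
  wz : w ≠ z
  yz : y ≠ z
  adj_wy : G.Adj w y
  adj_wz : G.Adj w z
  not_adj_yz : ¬ G.Adj y z
  adj_path : ∀ i j : Fin (k + 1), G.Adj (x i) (x j) ↔ (i.1 + 1 = j.1 ∨ j.1 + 1 = i.1)
  adj_y : ∀ i : Fin (k + 1), G.Adj y (x i) ↔ i.1 = k
  adj_z : ∀ i : Fin (k + 1), G.Adj z (x i) ↔ i.1 = k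
  adj_w : ∀ i : Fin (k + 1), G.Adj w (x i) ↔ (t2 = true ∧ i.1 + 1 = k)
  sign_y : ∀ i : Fin (k + 1), i.1 = k → G.sign (x i) y = false
  sign_z : ∀ i : Fin (k + 1), i.1 = k → G.sign (x i) z = false
  sign_w : ∀ i : Fin (k + 1), t2 = true → i.1 + 1 = k → G.sign w (x i) = false

/-- `G` contains a sum of two tadpoles (identified at their ends) as an induced
subgraph. -/
def HasTadpoleSum (G : SignedBigraph V) : Prop :=
  ∃ (k k' : ℕ) (t t' : Bool) (w y z w' y' z' : V)
    (x : Fin (k + 1) → V) (x' : Fin (k' + 1) → V),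
    G.IsInducedTadpole k t w y z x ∧ G.IsInducedTadpole k' t' w' y' z' x' ∧
    x 0 = x' 0 ∧
    tadVerts w y z x ∩ tadVerts w' y' z' x' = {x 0} ∧
    ∀ a ∈ tadVerts w y z x, ∀ b ∈ tadVerts w' y' z' x',
      a ≠ x 0 → b ≠ x' 0 → ¬ G.Adj a b

/-- `G` contains a join of two tadpoles as an induced subgraph: two disjoint induced
tadpoles such that the edges between them are exactly those joining the end of each
tadpole to all vertices of the other tadpole in the opposite partite set; all these
edges are positive, except that the edge from an end to the head `w` of the other
tadpole may be of either sign when that tadpole is a member of `W₁` (i.e. has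
`k = 0` and is of type 1), in which case the ends are required to be adjacent. -/
def HasTadpoleJoin (G : SignedBigraph V) : Prop :=
  ∃ (k k' : ℕ) (t t' : Bool) (w y z w' y' z' : V)
    (x : Fin (k + 1) → V) (x' : Fin (k' + 1) → V),
    G.IsInducedTadpole k t w y z x ∧ G.IsInducedTadpole k' t' w' y' z' x' ∧
    Disjoint (tadVerts w y z x) (tadVerts w' y' z' x') ∧
    (∀ a ∈ tadVerts w y z x, ∀ b ∈ tadVerts w' y' z' x',
      (G.Adj a b ↔ ((a = x 0 ∨ b = x' 0) ∧ G.side a ≠ G.side b))) ∧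
    ((k = 0 ∧ t = false) ∨ (k' = 0 ∧ t' = false) → G.side (x 0) ≠ G.side (x' 0)) ∧
    (∀ a ∈ tadVerts w y z x, ∀ b ∈ tadVerts w' y' z' x', G.Adj a b →
      ¬ (a = x 0 ∧ b = w' ∧ k' = 0 ∧ t' = false) →
      ¬ (a = w ∧ b = x' 0 ∧ k = 0 ∧ t = false) →
      G.sign a b = true)

/-- `G` contains a member of
`ℱ = F₁ ∪ F₂ ∪ F₃ ∪ F₄ ∪ F₅ ∪ F₆ ∪ 𝒞 ∪ D ∪ 𝒮 ∪ 𝒥` as an induced subgraph. -/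
def HasForbidden (G : SignedBigraph V) : Prop :=
  G.HasF1 ∨ G.HasF2 ∨ G.HasF3 ∨ G.HasF4 ∨ G.HasF5 ∨ G.HasF6 ∨
  G.HasLongCycle ∨ G.HasD ∨ G.HasTadpoleSum ∨ G.HasTadpoleJoin

/-- `G` is `ℱ`-free. -/
def FFree (G : SignedBigraph V) : Prop := ¬ G.HasForbidden

end SignedBigraph

/-! ## Concrete complete signed bipartite graphs (for the graphs M₁ – M₅) -/

/-- The complete bipartite graph on `Fin a ⊕ Fin b`. -/
def cbsGraph (a b : ℕ) : SimpleGraph (Fin a ⊕ Fin b) where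
  Adj u v := u.isLeft ≠ v.isLeft
  symm := ⟨fun _ _ h => Ne.symm h⟩
  loopless := ⟨fun _ h => h rfl⟩

def cbsSign {a b : ℕ} (sgn : Fin a → Fin b → Bool) :
    Fin a ⊕ Fin b → Fin a ⊕ Fin b → Bool
  | Sum.inl i, Sum.inr j => sgn i j
  | Sum.inr j, Sum.inl i => sgn i j
  | _, _ => true

/-- The complete signed bipartite graph with parts `Fin a`, `Fin b`, and signs given
by `sgn`. -/
def completeSignedBigraph (a b : ℕ) (sgn : Fin a → Fin b → Bool) :
    SignedBigraph (Fin a ⊕ Fin b) where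
  graph := cbsGraph a b
  sign := cbsSign sgn
  sign_symm := by
    intro u v
    cases u <;> cases v <;> rfl
  side := Sum.isLeft
  bipartite := fun _ _ h => h

/-- `M₁`: the all-negative 4-cycle. -/
def Mgraph1 : SignedBigraph (Fin 2 ⊕ Fin 2) :=
  completeSignedBigraph 2 2 (fun _ _ => false)

/-- `M₂`. -/
def Mgraph2 : SignedBigraph (Fin 2 ⊕ Fin 3) :=
  completeSignedBigraph 2 3
    (fun i j => ! decide ((i = 0 ∧ (j = 0 ∨ j = 1)) ∨ (i = 1 ∧ (j = 1 ∨ j = 2))))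

/-- `M₃`. -/
def Mgraph3 : SignedBigraph (Fin 2 ⊕ Fin 4) :=
  completeSignedBigraph 2 4
    (fun i j => ! decide ((i = 0 ∧ (j = 0 ∨ j = 1)) ∨ (i = 1 ∧ (j = 2 ∨ j = 3))))

/-- `M₄`. -/
def Mgraph4 : SignedBigraph (Fin 3 ⊕ Fin 3) :=
  completeSignedBigraph 3 3 (fun i j => ! decide ((i : ℕ) = (j : ℕ)))

/-- `M₅`. -/
def Mgraph5 : SignedBigraph (Fin 3 ⊕ Fin 3) :=
  completeSignedBigraph 3 3
    (fun i j => ! decide ((i = 0 ∧ (j = 0 ∨ j = 1)) ∨ (i = 1 ∧ j = 1) ∨ (i = 2 ∧ j = 2)))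

/-!
In a complete bigraph, `ab` being signed simplicial says exactly that every edge avoiding
both `a` and `b` is positive. Once `ab` is deleted, each edge `ay` is signed simplicial: its
edge neighbourhood spans only edges avoiding `a` and `b`, and this survives deleting further
edges at `a`. So the whole star at `a` can be eliminated, then likewise the star at `b`, and
what is left is a complete bigraph with all edges positive, which is eliminated one star at a
time.
-/

namespace SignedBigraph

variable {V : Type u} {G : SignedBigraph V}

theorem Adj.symm {a b : V} (h : G.Adj a b) : G.Adj b a := SimpleGraph.Adj.symm h

@[simp]
theorem deleteEdges_adj {s : Set (Sym2 V)} {a b : V} :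
    (G.deleteEdges s).Adj a b ↔ G.Adj a b ∧ s(a, b) ∉ s :=
  SimpleGraph.deleteEdges_adj

@[simp]
theorem deleteEdges_side (s : Set (Sym2 V)) : (G.deleteEdges s).side = G.side := rfl

theorem deleteEdges_eq_self_of_disjoint {s : Set (Sym2 V)} (h : Disjoint G.graph.edgeSet s) :
    G.deleteEdges s = G := by
  cases G
  simpa only [deleteEdges, mk.injEq, and_true] using SimpleGraph.deleteEdges_eq_self.mpr h

theorem deleteEdges_deleteEdges (s t : Set (Sym2 V)) :
    (G.deleteEdges s).deleteEdges t = G.deleteEdges (s ∪ t) := by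
  cases G
  simp only [deleteEdges, SimpleGraph.deleteEdges_deleteEdges]

theorem isChordal_of_edgeSet_eq_empty (h : G.graph.edgeSet = ∅) : G.IsChordal :=
  ⟨[], List.nodup_nil, by simp [h], fun i hi => absurd hi (Nat.not_lt_zero i)⟩

theorem isChordal_of_deleteEdges_signedSimplicial {a b : V} (hab : G.SignedSimplicial a b)
    (h : (G.deleteEdges {s(a, b)}).IsChordal) : G.IsChordal := by
  obtain ⟨l, hnodup, hmem, hsimp⟩ := h
  simp only [deleteEdges, SimpleGraph.edgeSet_deleteEdges, Set.mem_sdiff,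
    Set.mem_singleton_iff] at hmem
  refine ⟨s(a, b) :: l, ?_, fun e => ?_, ?_⟩
  · exact List.nodup_cons.mpr ⟨fun h => ((hmem _).mpr h).2 rfl, hnodup⟩
  · by_cases he : e = s(a, b)
    · rw [he]; exact iff_of_true (G.graph.mem_edgeSet.mpr hab.1) List.mem_cons_self
    · simp [he, ← hmem]
  · rintro (_ | i) hi
    · exact ⟨a, b, rfl, by simpa [deleteEdges_eq_self_of_disjoint] using hab⟩
    · obtain ⟨c, d, hget, hcd⟩ := hsimp i (Nat.lt_of_succ_lt_succ hi)
      refine ⟨c, d, hget, ?_⟩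
      have : {e | e ∈ (s(a, b) :: l).take (i + 1)} = {s(a, b)} ∪ {e | e ∈ l.take i} := by
        ext; simp
      rwa [this, ← deleteEdges_deleteEdges]

theorem side_eq_of_adj_of_adj {x c d : V} (hc : G.Adj x c) (hd : G.Adj x d) :
    G.side c = G.side d :=
  (Bool.eq_not_of_ne (G.bipartite hc).symm).trans (Bool.eq_not_of_ne (G.bipartite hd).symm).symm

/-- Every edge `xy` at `x` is signed simplicial, and stays so while the other edges at `x`
are deleted. -/
def SignedSimplicialStar (G : SignedBigraph V) (x : V) : Prop :=
  ∀ y c d, G.Adj x y → G.Adj y c → G.Adj x d → c ≠ x → d ≠ y → G.Adj c d ∧ G.sign c d = true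

theorem SignedSimplicialStar.signedSimplicial {x y : V} (hx : G.SignedSimplicialStar x)
    (hxy : G.Adj x y) : G.SignedSimplicial x y := by
  have key : ∀ c ∈ G.edgeNbhd x y, ∀ d ∈ G.edgeNbhd x y, G.side c ≠ G.side d →
      G.Adj y c → G.Adj x d → G.Adj c d ∧ G.sign c d = true := by
    intro c hc d hd _ hyc hxd
    exact hx y c d hxy hyc hxd (fun h => hc.2 (Or.inl h)) (fun h => hd.2 (Or.inr h))
  refine ⟨hxy, fun c hc d hd hcd => ?_⟩
  rcases hc.1 with hxc | hyc <;> rcases hd.1 with hxd | hyd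
  · exact absurd (side_eq_of_adj_of_adj hxc hxd) hcd
  · obtain ⟨hdc, hsign⟩ := key d hd c hc (Ne.symm hcd) hyd hxc
    exact ⟨hdc.symm, G.sign_symm c d ▸ hsign⟩
  · exact key c hc d hd hcd hyc hxd
  · exact absurd (side_eq_of_adj_of_adj hyc hyd) hcd

theorem SignedSimplicialStar.deleteEdges {x : V} {s : Set (Sym2 V)}
    (hx : G.SignedSimplicialStar x) (hs : ∀ e ∈ s, x ∈ e) :
    (G.deleteEdges s).SignedSimplicialStar x := by
  intro y c d hxy hyc hxd hcx hdy
  simp only [deleteEdges_adj] at hxy hyc hxd ⊢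
  refine ⟨⟨(hx y c d hxy.1 hyc.1 hxd.1 hcx hdy).1, fun hcd => ?_⟩,
    (hx y c d hxy.1 hyc.1 hxd.1 hcx hdy).2⟩
  rcases Sym2.mem_iff.mp (hs _ hcd) with rfl | rfl
  · exact hcx rfl
  · exact G.graph.loopless.irrefl x hxd.1

theorem neighborSet_deleteEdges_singleton (x y : V) :
    (G.deleteEdges {s(x, y)}).graph.neighborSet x = G.graph.neighborSet x \ {y} := by
  ext z
  simp only [SimpleGraph.mem_neighborSet, Set.mem_sdiff, Set.mem_singleton_iff]
  exact deleteEdges_adj.trans (and_congr_right fun _ =>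
    not_congr (Set.mem_singleton_iff.trans Sym2.congr_right))

theorem isChordal_of_signedSimplicialStar {x : V} (hfin : (G.graph.neighborSet x).Finite)
    (hx : G.SignedSimplicialStar x) (h : (G.deleteEdges {e | x ∈ e}).IsChordal) :
    G.IsChordal := by
  induction hn : (G.graph.neighborSet x).ncard generalizing G with
  | zero =>
    have hdisj : Disjoint G.graph.edgeSet {e | x ∈ e} := by
      refine Set.disjoint_left.mpr fun e he hxe => ?_
      obtain ⟨z, rfl⟩ := Sym2.mem_iff_exists.mp hxe
      have hz : z ∈ G.graph.neighborSet x := he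
      simp [(Set.ncard_eq_zero hfin).mp hn] at hz
    rwa [deleteEdges_eq_self_of_disjoint hdisj] at h
  | succ n ih =>
    obtain ⟨y, hxy⟩ : ∃ y, G.Adj x y := (Set.ncard_pos hfin).mp (by omega)
    have hdel : G.deleteEdges ({s(x, y)} ∪ {e | x ∈ e}) = G.deleteEdges {e | x ∈ e} := by
      rw [Set.union_eq_right.mpr (by simp)]
    refine isChordal_of_deleteEdges_signedSimplicial (hx.signedSimplicial hxy)
      (ih (hfin.subset ?_) (hx.deleteEdges (by simp)) ?_ ?_)
    · exact fun z hz => (deleteEdges_adj.mp hz).1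
    · rwa [deleteEdges_deleteEdges, hdel]
    · rw [neighborSet_deleteEdges_singleton,
        Set.ncard_sdiff_singleton_of_mem (s := G.graph.neighborSet x) hxy, hn]
      rfl

def IsCompleteOn (G : SignedBigraph V) (S : Set V) : Prop :=
  ∀ u v, G.Adj u v ↔ u ∈ S ∧ v ∈ S ∧ G.side u ≠ G.side v

theorem IsCompleteOn.deleteEdges_incident {S : Set V} (hG : G.IsCompleteOn S) (x : V) :
    (G.deleteEdges {e | x ∈ e}).IsCompleteOn (S \ {x}) := by
  intro u v
  rw [deleteEdges_adj, hG]
  simp only [Set.mem_ofPred_eq, Sym2.mem_iff, Set.mem_sdiff, Set.mem_singleton_iff,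
    deleteEdges_side]
  grind

theorem IsCompleteOn.signedSimplicialStar {S : Set V} {x : V} (hG : G.IsCompleteOn S)
    (hpos : ∀ u v, G.Adj u v → x ∉ s(u, v) → G.sign u v = true) :
    G.SignedSimplicialStar x := by
  intro y c d hxy hyc hxd hcx _
  have hside : G.side c ≠ G.side d := side_eq_of_adj_of_adj hxy.symm hyc ▸ G.bipartite hxd
  have hcd : G.Adj c d := (hG c d).mpr ⟨((hG y c).mp hyc).2.1, ((hG x d).mp hxd).2.1, hside⟩
  refine ⟨hcd, hpos c d hcd fun hx => ?_⟩
  rcases Sym2.mem_iff.mp hx with rfl | rfl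
  · exact hcx rfl
  · exact G.graph.loopless.irrefl x hxd

theorem IsCompleteOn.isChordal {S : Set V} (hS : S.Finite) (hG : G.IsCompleteOn S)
    (hpos : ∀ u v, G.Adj u v → G.sign u v = true) : G.IsChordal := by
  induction S, hS using Set.Finite.induction_on generalizing G with
  | empty =>
    refine isChordal_of_edgeSet_eq_empty (Set.eq_empty_iff_forall_notMem.mpr fun e => ?_)
    exact Sym2.ind (fun u v huv => ((hG u v).mp (G.graph.mem_edgeSet.mp huv)).1) e
  | @insert x T hxT hT ih =>
    have hnbhd : G.graph.neighborSet x ⊆ insert x T := fun v hv => ((hG x v).mp hv).2.1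
    refine isChordal_of_signedSimplicialStar ((hT.insert x).subset hnbhd)
      (hG.signedSimplicialStar fun u v huv _ => hpos u v huv) (ih ?_ ?_)
    · simpa [Set.insert_sdiff_self_of_notMem hxT] using hG.deleteEdges_incident x
    · exact fun u v huv => hpos u v (deleteEdges_adj.mp huv).1

theorem IsCompleteOn.mem_edgeNbhd {a b u : V} (hG : G.IsCompleteOn Set.univ) (hab : G.Adj a b)
    (hua : u ≠ a) (hub : u ≠ b) : u ∈ G.edgeNbhd a b := by
  refine ⟨?_, by simp [hua, hub]⟩
  by_cases hu : G.side a = G.side u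
  · exact Or.inr ((hG b u).mpr ⟨trivial, trivial, hu ▸ (G.bipartite hab).symm⟩)
  · exact Or.inl ((hG a u).mpr ⟨trivial, trivial, hu⟩)

theorem IsCompleteOn.sign_eq_true_of_signedSimplicial {a b : V} (hG : G.IsCompleteOn Set.univ)
    (hab : G.SignedSimplicial a b) {u v : V} (huv : G.Adj u v) (ha : a ∉ s(u, v))
    (hb : b ∉ s(u, v)) : G.sign u v = true := by
  simp only [Sym2.mem_iff, not_or] at ha hb
  exact (hab.2 u (hG.mem_edgeNbhd hab.1 (Ne.symm ha.1) (Ne.symm hb.1))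
    v (hG.mem_edgeNbhd hab.1 (Ne.symm ha.2) (Ne.symm hb.2)) (G.bipartite huv)).2

theorem IsCompleteOn.signedSimplicialStar_deleteEdges {a b : V} (hG : G.IsCompleteOn Set.univ)
    (hab : G.SignedSimplicial a b) : (G.deleteEdges {s(a, b)}).SignedSimplicialStar a := by
  intro y c d hay hyc had hca _
  simp only [deleteEdges_adj, Set.mem_singleton_iff] at hay hyc had ⊢
  have hdb : d ≠ b := fun h => had.2 (h ▸ rfl)
  have hside : G.side a = G.side c := side_eq_of_adj_of_adj hay.1.symm hyc.1
  have hcb : c ≠ b := fun h => G.bipartite hab.1 (hside.trans (congrArg G.side h))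
  have hcd : G.Adj c d := (hG c d).mpr ⟨trivial, trivial, hside ▸ G.bipartite had.1⟩
  refine ⟨⟨hcd, fun h => ?_⟩, hG.sign_eq_true_of_signedSimplicial hab hcd ?_ ?_⟩
  · rcases Sym2.eq_iff.mp h with ⟨h, -⟩ | ⟨h, -⟩
    exacts [hca h, hcb h]
  · rw [Sym2.mem_iff]
    rintro (h | h)
    exacts [hca h.symm, G.graph.loopless.irrefl a (h ▸ had.1)]
  · rw [Sym2.mem_iff]
    rintro (h | h)
    exacts [hcb h.symm, hdb h.symm]

end SignedBigraph

open SignedBigraph in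
/-- Lemma 2.1: a signed complete bigraph with a signed simplicial
edge is a chordal signed bigraph. -/
theorem signedCompleteBigraph_isChordal_of_signedSimplicial
    {V : Type u} [Fintype V] (G : SignedBigraph V)
    (hcomp : ∀ a b : V, G.side a ≠ G.side b → G.Adj a b)
    (h : ∃ a b : V, G.SignedSimplicial a b) :
    G.IsChordal := by
  obtain ⟨a, b, hab⟩ := h
  have hG : G.IsCompleteOn Set.univ := fun u v =>
    ⟨fun huv => ⟨trivial, trivial, G.bipartite huv⟩, fun huv => hcomp u v huv.2.2⟩
  have hpos {u v : V} : G.Adj u v → a ∉ s(u, v) → b ∉ s(u, v) → G.sign u v = true :=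
    hG.sign_eq_true_of_signedSimplicial hab
  have hGa := hG.deleteEdges_incident a
  refine isChordal_of_deleteEdges_signedSimplicial hab (isChordal_of_signedSimplicialStar
    (Set.toFinite _) (hG.signedSimplicialStar_deleteEdges hab) ?_)
  rw [deleteEdges_deleteEdges, Set.union_eq_right.mpr (by simp)]
  refine isChordal_of_signedSimplicialStar (Set.toFinite _)
    (hGa.signedSimplicialStar fun u v huv => hpos (deleteEdges_adj.mp huv).1
      (deleteEdges_adj.mp huv).2) ?_
  refine (hGa.deleteEdges_incident b).isChordal (Set.toFinite _) fun u v huv => ?_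
  obtain ⟨huv, hbuv⟩ := deleteEdges_adj.mp huv
  exact hpos (deleteEdges_adj.mp huv).1 (deleteEdges_adj.mp huv).2 hbuv
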